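/- Let k ≥ 1, let m₁,…,m_{2k} be positive integers with m₁ ≥ 2, let G = Γ(m₁,…,m_{2k}) with Laplacian L, and for t ∈ ℝ let U_t = exp(−itL). Let i ≠ j be vertices with i ∈ B_p and j ∈ B_q where p ≤ q. Then |(U_t)_{i,j}| ≤ 2/σ_q for all t ∈ ℝ; in particular, if q ≥ 2 then |(U_t)_{i,j}| < 1. -/

import Mathlib

/-!
Let `ψ_l` be the uniform probability vector on the first `l` blocks. Then
`e_j = (e_j - ψ_q) + ∑_{q ≤ l < r} (ψ_l - ψ_{l+1}) + ψ_r`, and every summand is an eigenvector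
of `L`: a vertex outside the first `l` blocks is adjacent to all of them or to none, and all
vertices inside them have the same neighbours outside. So `U_t` multiplies each summand by a
unimodular factor, and at a vertex `i ≠ j` of a block `≤ q` the summands take the values
`-1/σ_q`, `1/σ_l - 1/σ_{l+1} ≥ 0` and `1/σ_r`, whose absolute values add up to `2/σ_q`.
-/

open Finset Matrix

/-- `sig m l = m 1 + ⋯ + m l` (block sizes `m` are indexed starting from 1). -/
def sig (m : ℕ → ℕ) (l : ℕ) : ℕ := ∑ i ∈ Finset.Icc 1 l, m i

/-- The (1-based) index of the block containing the (0-based) vertex `v`: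
`blk r m v = b` iff `sig m (b-1) ≤ v < sig m b`. -/
def blk (r : ℕ) (m : ℕ → ℕ) (v : ℕ) : ℕ :=
  1 + ((Finset.Icc 1 r).filter (fun l => sig m l ≤ v)).card

/-- `Γ(m₁,…,m_r) = ((((O_{m₁} ∨ K_{m₂}) ∪ O_{m₃}) ∨ K_{m₄}) ⋯ )`:
the odd-indexed blocks are added as sets of isolated vertices (disjoint union with `O_{m_l}`)
and the even-indexed blocks are cliques joined to everything already present.  Hence two
distinct vertices are adjacent iff the larger of their two block indices is even.  Vertices
are labelled `0,…,n-1` (`n = m₁+⋯+m_r`), block `B₁` first, then `B₂`, etc. -/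
def GammaEven (r : ℕ) (m : ℕ → ℕ) : SimpleGraph (Fin (sig m r)) where
  Adj u v := u ≠ v ∧ (max (blk r m (u : ℕ)) (blk r m (v : ℕ))) % 2 = 0
  symm := by
    constructor
    intro u v h
    exact ⟨h.1.symm, by rw [max_comm]; exact h.2⟩
  loopless := by constructor; intro u h; exact h.1 rfl

instance (r : ℕ) (m : ℕ → ℕ) : DecidableRel (GammaEven r m).Adj := fun u v =>
  decidable_of_iff (u ≠ v ∧ (max (blk r m (u : ℕ)) (blk r m (v : ℕ))) % 2 = 0) Iff.rfl

/-- `U_t = exp(−itL)`, where `L` is the Laplacian matrix of `G` (diagonal entries the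
degrees, entry `−1` for each edge, `0` otherwise). -/
noncomputable def Ut {n : ℕ} (G : SimpleGraph (Fin n)) [DecidableRel G.Adj] (t : ℝ) :
    Matrix (Fin n) (Fin n) ℂ :=
  NormedSpace.exp ((-(Complex.I * (t : ℂ))) • G.lapMatrix ℂ)

/-- The transfer probability `p_G(i,j,t) = |(U_t)_{j,i}|²`. -/
noncomputable def transferProb {n : ℕ} (G : SimpleGraph (Fin n)) [DecidableRel G.Adj]
    (i j : Fin n) (t : ℝ) : ℝ :=
  ‖Ut G t j i‖ ^ 2

/-- `λ₀(j) = m_{j+1} + m_{j+3} + ⋯ + m_{2k}` (the indices run over `j+1, j+3, …`). -/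
def lam0 (k : ℕ) (m : ℕ → ℕ) (j : ℕ) : ℕ :=
  ∑ l ∈ (Finset.Icc (j + 1) (2 * k)).filter (fun l => (l - j) % 2 = 1), m l

/-- `λ₁(j) = σ_j + m_{j+2} + m_{j+4} + ⋯ + m_{2k}` (the sum runs over `j+2, j+4, …`). -/
def lam1 (k : ℕ) (m : ℕ → ℕ) (j : ℕ) : ℕ :=
  sig m j + ∑ l ∈ (Finset.Icc (j + 2) (2 * k)).filter (fun l => (l - j) % 2 = 0), m l

open scoped Norms.Operator in
lemma Matrix.exp_mulVec_of_mulVec_eq_smul {n 𝕂 : Type*} [Fintype n] [DecidableEq n] [RCLike 𝕂]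
    {A : Matrix n n 𝕂} {v : n → 𝕂} {μ : 𝕂} (h : A *ᵥ v = μ • v) :
    NormedSpace.exp A *ᵥ v = NormedSpace.exp μ • v := by
  have hpow (k : ℕ) : A ^ k *ᵥ v = μ ^ k • v := by
    induction k with
    | zero => simp
    | succ k ih => rw [pow_succ', ← mulVec_mulVec, ih, mulVec_smul, h, smul_smul, pow_succ]
  have hA := (NormedSpace.exp_series_hasSum_exp' (𝕂 := 𝕂) A).map (mulVec.addMonoidHomLeft v)
    (continuous_id.matrix_mulVec continuous_const)
  have hμ := (NormedSpace.exp_series_hasSum_exp' (𝕂 := 𝕂) μ).smul_const v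
  refine hA.unique (hμ.congr_fun fun k => ?_)
  simp [mulVec.addMonoidHomLeft, smul_mulVec, hpow, smul_smul]

lemma norm_exp_smul_mulVec_apply_of_mulVec_eq_smul {n : Type*} [Fintype n] [DecidableEq n]
    {L : Matrix n n ℂ} {v : n → ℂ} {μ : ℝ} (h : L *ᵥ v = (μ : ℂ) • v) (t : ℝ) (i : n) :
    ‖(NormedSpace.exp ((-(Complex.I * t)) • L) *ᵥ v) i‖ = ‖v i‖ := by
  have hv : ((-(Complex.I * t)) • L) *ᵥ v = (((-(t * μ) : ℝ) : ℂ) * Complex.I) • v := by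
    rw [smul_mulVec, h, smul_smul]
    congr 1
    push_cast
    ring
  rw [Matrix.exp_mulVec_of_mulVec_eq_smul hv, ← Complex.exp_eq_exp_ℂ, Pi.smul_apply, norm_smul,
    Complex.norm_exp_ofReal_mul_I, one_mul]

lemma Finset.sum_Ico_sub' {M : Type*} [AddCommGroup M] (f : ℕ → M) {a b : ℕ} (hab : a ≤ b) :
    ∑ l ∈ Finset.Ico a b, (f l - f (l + 1)) = f a - f b := by
  simpa only [neg_sub_neg] using Finset.sum_Ico_sub (fun l => -f l) hab

lemma sig_mono (m : ℕ → ℕ) : Monotone (sig m) := fun _ _ hab =>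
  Finset.sum_le_sum_of_subset (Finset.Icc_subset_Icc_right hab)

lemma sig_one (m : ℕ → ℕ) : sig m 1 = m 1 := by simp [sig]

lemma sig_pos {m : ℕ → ℕ} (hm1 : 0 < m 1) {l : ℕ} (hl : 1 ≤ l) : 0 < sig m l :=
  (sig_one m ▸ hm1).trans_le (sig_mono m hl)

lemma one_le_blk (r : ℕ) (m : ℕ → ℕ) (v : ℕ) : 1 ≤ blk r m v := Nat.le_add_right 1 _

lemma blk_le_iff {r : ℕ} {m : ℕ → ℕ} {v l : ℕ} (hl : l ≤ r) :
    blk r m v ≤ l ↔ v < sig m l := by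
  set S := (Finset.Icc 1 r).filter (fun c => sig m c ≤ v)
  have hblk : blk r m v = 1 + #S := rfl
  constructor
  · intro h
    by_contra! hlv
    have hsub : Finset.Icc 1 l ⊆ S := fun c hc => by
      simp only [Finset.mem_Icc, S, Finset.mem_filter] at hc ⊢
      exact ⟨⟨hc.1, hc.2.trans hl⟩, (sig_mono m hc.2).trans hlv⟩
    have := Finset.card_le_card hsub
    simp only [Nat.card_Icc] at this
    omega
  · intro h
    have hl1 : l ≠ 0 := by rintro rfl; simp [sig] at h
    have hsub : S ⊆ Finset.Icc 1 (l - 1) := fun c hc => by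
      simp only [Finset.mem_Icc, S, Finset.mem_filter] at hc ⊢
      have : c < l := (sig_mono m).reflect_lt (hc.2.trans_lt h)
      omega
    have := Finset.card_le_card hsub
    simp only [Nat.card_Icc] at this
    omega

lemma blk_le {r : ℕ} {m : ℕ → ℕ} {v : ℕ} (hv : v < sig m r) : blk r m v ≤ r :=
  (blk_le_iff le_rfl).2 hv

lemma lt_sig_blk {r : ℕ} {m : ℕ → ℕ} {v : ℕ} (hv : v < sig m r) : v < sig m (blk r m v) :=
  (blk_le_iff (blk_le hv)).1 le_rfl

lemma sig_pred_blk_le {r : ℕ} {m : ℕ → ℕ} {v : ℕ} (hv : v < sig m r) :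
    sig m (blk r m v - 1) ≤ v := by
  have hnot := (blk_le_iff (m := m) (v := v) ((Nat.sub_le _ 1).trans (blk_le hv))).not.1
  have hpos := one_le_blk r m v
  omega

lemma card_filter_blk_le {r : ℕ} (m : ℕ → ℕ) {l : ℕ} (hl : l ≤ r) :
    #{w : Fin (sig m r) | blk r m w ≤ l} = sig m l := by
  have hiff (w : Fin (sig m r)) : blk r m w ≤ l ↔ (w : ℕ) < sig m l := blk_le_iff hl
  simp_rw [hiff]
  rw [Fin.card_filter_val_lt, min_eq_right (sig_mono m hl)]

section GammaEvenLaplacian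

variable {r : ℕ} {m : ℕ → ℕ}

/-- The neighbours of a vertex of block `b`, together with the vertex itself when `b` is even. -/
def linkedTo (r : ℕ) (m : ℕ → ℕ) (b : ℕ) : Finset (Fin (sig m r)) :=
  {w | max b (blk r m w) % 2 = 0}

def evenAbove (r : ℕ) (m : ℕ → ℕ) (l : ℕ) : Finset (Fin (sig m r)) :=
  {w | l < blk r m w ∧ blk r m w % 2 = 0}

@[simp]
lemma mem_linkedTo {b : ℕ} {w : Fin (sig m r)} :
    w ∈ linkedTo r m b ↔ max b (blk r m w) % 2 = 0 := by
  simp [linkedTo]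

noncomputable def uniformBelow (r : ℕ) (m : ℕ → ℕ) (l : ℕ) : Fin (sig m r) → ℂ :=
  fun w => if blk r m w ≤ l then (sig m l : ℂ)⁻¹ else 0

lemma filter_linkedTo_not_le {b l : ℕ} (h : b ≤ l + 1) :
    (linkedTo r m b).filter (fun w : Fin (sig m r) => ¬ blk r m w ≤ l) = evenAbove r m l := by
  ext w
  simp only [evenAbove, Finset.mem_filter, mem_linkedTo, Finset.mem_univ, true_and]
  constructor
  · rintro ⟨hw, hlw⟩
    exact ⟨by omega, by rwa [max_eq_right (by omega)] at hw⟩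
  · rintro ⟨hlw, hw⟩
    exact ⟨by rwa [max_eq_right (by omega)], by omega⟩

lemma card_filter_linkedTo_le {b l : ℕ} (h : l ≤ b) (hl : l ≤ r) :
    #((linkedTo r m b).filter (fun w : Fin (sig m r) => blk r m w ≤ l))
      = if b % 2 = 0 then sig m l else 0 := by
  have hfilter : (linkedTo r m b).filter (fun w : Fin (sig m r) => blk r m w ≤ l)
      = ({w | b % 2 = 0 ∧ blk r m w ≤ l} : Finset (Fin (sig m r))) := by
    ext w
    simp only [Finset.mem_filter, mem_linkedTo, Finset.mem_univ, true_and]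
    constructor
    · rintro ⟨hw, hwl⟩
      exact ⟨by rwa [max_eq_left (by omega)] at hw, hwl⟩
    · rintro ⟨hb, hwl⟩
      exact ⟨by rwa [max_eq_left (by omega)], hwl⟩
  split_ifs with hb
  · simpa [hfilter, hb] using card_filter_blk_le m hl
  · simp [hfilter, hb]

lemma card_linkedTo {b l : ℕ} (hlb : l ≤ b) (hbl : b ≤ l + 1) (hl : l ≤ r) :
    #(linkedTo r m b) = #(evenAbove r m l) + if b % 2 = 0 then sig m l else 0 := by
  rw [← Finset.card_filter_add_card_filter_not (fun w : Fin (sig m r) => blk r m w ≤ l),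
    card_filter_linkedTo_le hlb hl, filter_linkedTo_not_le hbl, add_comm]

lemma GammaEven.lapMatrix_mulVec_apply (x : Fin (sig m r) → ℂ) (u : Fin (sig m r)) :
    ((GammaEven r m).lapMatrix ℂ *ᵥ x) u = ∑ w ∈ linkedTo r m (blk r m u), (x u - x w) := by
  have hsub : (GammaEven r m).neighborFinset u ⊆ linkedTo r m (blk r m u) := fun w hw => by
    simp only [SimpleGraph.mem_neighborFinset] at hw
    exact mem_linkedTo.2 hw.2
  rw [SimpleGraph.lapMatrix_mulVec_apply, ← Finset.sum_subset hsub, Finset.sum_sub_distrib,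
    Finset.sum_const, SimpleGraph.card_neighborFinset_eq_degree, nsmul_eq_mul]
  intro w hw hnw
  obtain rfl : w = u := by
    by_contra hwu
    exact hnw ((SimpleGraph.mem_neighborFinset _ _ _).2 ⟨Ne.symm hwu, mem_linkedTo.1 hw⟩)
  exact sub_self _

lemma GammaEven.lapMatrix_mulVec_uniformBelow_apply {l : ℕ} (hl : l ≤ r) (hσ : sig m l ≠ 0)
    (u : Fin (sig m r)) :
    ((GammaEven r m).lapMatrix ℂ *ᵥ uniformBelow r m l) u =
      if blk r m u ≤ l then #(evenAbove r m l) * (sig m l : ℂ)⁻¹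
      else -if blk r m u % 2 = 0 then 1 else 0 := by
  rw [GammaEven.lapMatrix_mulVec_apply]
  by_cases hu : blk r m u ≤ l
  · have hterm (w : Fin (sig m r)) : uniformBelow r m l u - uniformBelow r m l w
        = if ¬ blk r m w ≤ l then (sig m l : ℂ)⁻¹ else 0 := by
      simp only [uniformBelow, if_pos hu]
      split_ifs <;> simp
    simp_rw [hterm, ← Finset.sum_filter, filter_linkedTo_not_le (by omega : blk r m u ≤ l + 1),
      Finset.sum_const, nsmul_eq_mul, if_pos hu]
  · have hterm (w : Fin (sig m r)) : uniformBelow r m l u - uniformBelow r m l w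
        = if blk r m w ≤ l then -(sig m l : ℂ)⁻¹ else 0 := by
      simp only [uniformBelow, if_neg hu]
      split_ifs <;> simp
    simp_rw [hterm, ← Finset.sum_filter, Finset.sum_const, nsmul_eq_mul,
      card_filter_linkedTo_le (by omega : l ≤ blk r m u) hl, if_neg hu]
    split_ifs
    · field_simp
    · simp

lemma GammaEven.lapMatrix_mulVec_single_apply (j u : Fin (sig m r)) :
    ((GammaEven r m).lapMatrix ℂ *ᵥ Pi.single j 1) u =
      (if u = j then (#(linkedTo r m (blk r m u)) : ℂ) else 0)
        - if j ∈ linkedTo r m (blk r m u) then 1 else 0 := by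
  rw [GammaEven.lapMatrix_mulVec_apply, Finset.sum_sub_distrib, Finset.sum_const,
    Finset.sum_pi_single', nsmul_eq_mul, Pi.single_apply]
  split_ifs <;> simp

lemma GammaEven.lapMatrix_mulVec_single_sub_uniformBelow (j : Fin (sig m r)) :
    (GammaEven r m).lapMatrix ℂ *ᵥ (Pi.single j 1 - uniformBelow r m (blk r m j))
      = (#(linkedTo r m (blk r m j)) : ℂ) • (Pi.single j 1 - uniformBelow r m (blk r m j)) := by
  have hqr : blk r m j ≤ r := blk_le j.isLt
  have hσ : sig m (blk r m j) ≠ 0 := (Nat.zero_lt_of_lt (lt_sig_blk j.isLt)).ne'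
  have hN := card_linkedTo (m := m) (le_refl (blk r m j)) (by omega) hqr
  funext u
  simp only [mulVec_sub, Pi.sub_apply, Pi.smul_apply, smul_eq_mul,
    GammaEven.lapMatrix_mulVec_single_apply, GammaEven.lapMatrix_mulVec_uniformBelow_apply hqr hσ,
    uniformBelow, Pi.single_apply, mem_linkedTo]
  generalize hq : blk r m j = q at *
  by_cases huj : u = j
  · subst huj
    simp only [if_true, max_self, le_refl, hq, hN]
    split_ifs <;> push_cast <;> field_simp <;> ring
  · by_cases hu : blk r m u ≤ q
    · simp only [if_neg huj, if_pos hu, max_eq_right hu, hN]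
      split_ifs <;> push_cast <;> field_simp <;> ring
    · simp only [if_neg huj, if_neg hu, max_eq_left (le_of_not_ge hu)]
      ring

lemma GammaEven.lapMatrix_mulVec_uniformBelow_sub_succ {l : ℕ} (hl : l + 1 ≤ r)
    (hσ : sig m l ≠ 0) :
    (GammaEven r m).lapMatrix ℂ *ᵥ (uniformBelow r m l - uniformBelow r m (l + 1))
      = (#(linkedTo r m (l + 1)) : ℂ) • (uniformBelow r m l - uniformBelow r m (l + 1)) := by
  have hσ' : sig m (l + 1) ≠ 0 := (Nat.pos_of_ne_zero hσ |>.trans_le (sig_mono m l.le_succ)).ne'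
  have hN := card_linkedTo (m := m) (le_refl (l + 1)) (by omega) hl
  have hN' := card_linkedTo (m := m) (by omega : l ≤ l + 1) le_rfl (by omega : l ≤ r)
  have hE : (#(evenAbove r m (l + 1)) : ℂ)
      = #(evenAbove r m l) + (if (l + 1) % 2 = 0 then (sig m l : ℂ) - sig m (l + 1) else 0) := by
    have := congrArg (Nat.cast : ℕ → ℂ) (hN'.symm.trans hN)
    split_ifs at this ⊢ <;> push_cast at this <;> linear_combination -this
  funext u
  simp only [mulVec_sub, Pi.sub_apply, Pi.smul_apply, smul_eq_mul,
    GammaEven.lapMatrix_mulVec_uniformBelow_apply hl hσ',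
    GammaEven.lapMatrix_mulVec_uniformBelow_apply (by omega : l ≤ r) hσ, uniformBelow]
  rcases lt_trichotomy (blk r m u) (l + 1) with hu | hu | hu
  · simp only [if_pos (by omega : blk r m u ≤ l), if_pos hu.le, hN', hE]
    split_ifs <;> push_cast <;> field_simp <;> ring
  · simp only [hu, if_neg (by omega : ¬ l + 1 ≤ l), le_refl, if_true, hN]
    split_ifs <;> push_cast <;> field_simp <;> ring
  · simp only [if_neg (by omega : ¬ blk r m u ≤ l), if_neg (by omega : ¬ blk r m u ≤ l + 1)]
    ring

lemma GammaEven.lapMatrix_mulVec_uniformBelow_self :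
    (GammaEven r m).lapMatrix ℂ *ᵥ uniformBelow r m r = 0 := by
  have hconst : uniformBelow r m r = fun _ => (sig m r : ℂ)⁻¹ :=
    funext fun w => if_pos (blk_le w.isLt)
  rw [hconst, show (fun _ => (sig m r : ℂ)⁻¹) = (sig m r : ℂ)⁻¹ • fun _ => (1 : ℂ) by
    ext; simp, mulVec_smul, SimpleGraph.lapMatrix_mulVec_const_eq_zero, smul_zero]

lemma GammaEven.norm_Ut_mulVec_single_sub_uniformBelow_apply {i j : Fin (sig m r)} (hij : i ≠ j)
    (hblk : blk r m i ≤ blk r m j) (t : ℝ) :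
    ‖(Ut (GammaEven r m) t *ᵥ (Pi.single j 1 - uniformBelow r m (blk r m j))) i‖
      = (sig m (blk r m j) : ℝ)⁻¹ := by
  have heig := GammaEven.lapMatrix_mulVec_single_sub_uniformBelow j
  rw [← Complex.ofReal_natCast] at heig
  refine (norm_exp_smul_mulVec_apply_of_mulVec_eq_smul heig t i).trans ?_
  simp [uniformBelow, hij, hblk]

lemma GammaEven.norm_Ut_mulVec_uniformBelow_sub_succ_apply (hm1 : 0 < m 1) {l : ℕ}
    (hl : 1 ≤ l) (hlr : l + 1 ≤ r) {i : Fin (sig m r)} (hi : blk r m i ≤ l) (t : ℝ) :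
    ‖(Ut (GammaEven r m) t *ᵥ (uniformBelow r m l - uniformBelow r m (l + 1))) i‖
      = (sig m l : ℝ)⁻¹ - (sig m (l + 1) : ℝ)⁻¹ := by
  have hσ := sig_pos hm1 hl
  have heig := GammaEven.lapMatrix_mulVec_uniformBelow_sub_succ hlr hσ.ne'
  rw [← Complex.ofReal_natCast] at heig
  have hanti : 0 ≤ (sig m l : ℝ)⁻¹ - (sig m (l + 1) : ℝ)⁻¹ :=
    sub_nonneg.2 (inv_anti₀ (by exact_mod_cast hσ) (by exact_mod_cast sig_mono m l.le_succ))
  refine (norm_exp_smul_mulVec_apply_of_mulVec_eq_smul heig t i).trans ?_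
  rw [← Real.norm_of_nonneg hanti, ← Complex.norm_real]
  simp [uniformBelow, hi, hi.trans l.le_succ]

lemma GammaEven.norm_Ut_mulVec_uniformBelow_self_apply (i : Fin (sig m r)) (t : ℝ) :
    ‖(Ut (GammaEven r m) t *ᵥ uniformBelow r m r) i‖ = (sig m r : ℝ)⁻¹ := by
  have heig : (GammaEven r m).lapMatrix ℂ *ᵥ uniformBelow r m r
      = ((0 : ℝ) : ℂ) • uniformBelow r m r := by
    simpa using GammaEven.lapMatrix_mulVec_uniformBelow_self (r := r) (m := m)
  refine (norm_exp_smul_mulVec_apply_of_mulVec_eq_smul heig t i).trans ?_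
  simp [uniformBelow, blk_le i.isLt]

lemma GammaEven.norm_Ut_apply_le (hm1 : 0 < m 1) {i j : Fin (sig m r)}
    (hij : i ≠ j) (hblk : blk r m i ≤ blk r m j) (t : ℝ) :
    ‖Ut (GammaEven r m) t i j‖ ≤ 2 / sig m (blk r m j) := by
  have hqr : blk r m j ≤ r := blk_le j.isLt
  set q := blk r m j
  set ψ := uniformBelow r m
  set U := Ut (GammaEven r m) t
  have hdecomp : Pi.single j 1
      = (Pi.single j 1 - ψ q) + ∑ l ∈ Finset.Ico q r, (ψ l - ψ (l + 1)) + ψ r := by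
    rw [Finset.sum_Ico_sub' ψ hqr]
    abel
  have hmid : ∀ l ∈ Finset.Ico q r, ‖(U *ᵥ (ψ l - ψ (l + 1))) i‖
      = (sig m l : ℝ)⁻¹ - (sig m (l + 1) : ℝ)⁻¹ := fun l hl =>
    have hl' := Finset.mem_Ico.1 hl
    GammaEven.norm_Ut_mulVec_uniformBelow_sub_succ_apply hm1 ((one_le_blk r m j).trans hl'.1)
      hl'.2 (hblk.trans hl'.1) t
  have hentry : U i j = (U *ᵥ Pi.single j 1) i := by
    rw [mulVec_single_one]
    rfl
  calc ‖U i j‖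
      = ‖(U *ᵥ (Pi.single j 1 - ψ q)) i + ∑ l ∈ Finset.Ico q r, (U *ᵥ (ψ l - ψ (l + 1))) i
          + (U *ᵥ ψ r) i‖ := by
        rw [hentry]
        nth_rw 1 [hdecomp]
        rw [mulVec_add, mulVec_add, mulVec_sum]
        simp only [Pi.add_apply, Finset.sum_apply]
    _ ≤ ‖(U *ᵥ (Pi.single j 1 - ψ q)) i‖ + ∑ l ∈ Finset.Ico q r, ‖(U *ᵥ (ψ l - ψ (l + 1))) i‖
          + ‖(U *ᵥ ψ r) i‖ := norm_add₃_le.trans (by gcongr; exact norm_sum_le _ _)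
    _ = 2 / sig m q := by
        rw [GammaEven.norm_Ut_mulVec_single_sub_uniformBelow_apply hij hblk,
          Finset.sum_congr rfl hmid, Finset.sum_Ico_sub' (fun l => (sig m l : ℝ)⁻¹) hqr,
          GammaEven.norm_Ut_mulVec_uniformBelow_self_apply]
        ring

end GammaEvenLaplacian

theorem ut_offdiag_entry_bound_general (k : ℕ) (m : ℕ → ℕ)
    (hm1 : 2 ≤ m 1)
    (i j : Fin (sig m (2 * k))) (hij : i ≠ j)
    (p q : ℕ) (hp : blk (2 * k) m (i : ℕ) = p) (hq : blk (2 * k) m (j : ℕ) = q)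
    (hpq : p ≤ q) (t : ℝ) :
    ‖Ut (GammaEven (2 * k) m) t i j‖ ≤ 2 / (sig m q : ℝ) ∧
      (2 ≤ q → ‖Ut (GammaEven (2 * k) m) t i j‖ < 1) := by
  subst hp hq
  have hbound := GammaEven.norm_Ut_apply_le (by omega) hij hpq t
  refine ⟨hbound, fun hq2 => hbound.trans_lt ?_⟩
  have hσ : 2 < sig m (blk (2 * k) m j) :=
    calc 2 ≤ sig m 1 := (sig_one m).symm ▸ hm1
      _ ≤ sig m (blk (2 * k) m j - 1) := sig_mono m (by omega)
      _ ≤ j := sig_pred_blk_le j.isLt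
      _ < sig m (blk (2 * k) m j) := lt_sig_blk j.isLt
  rw [div_lt_one (by positivity)]
  exact_mod_cast hσ

/-- For `G = Γ(m₁,…,m_{2k})`, distinct vertices `i ∈ B_p`, `j ∈ B_q`
with `p ≤ q`, one has `|(U_t)_{i,j}| ≤ 2/σ_q` for all `t`; in particular if `q ≥ 2` then
`|(U_t)_{i,j}| < 1`. -/
theorem ut_offdiag_entry_bound (k : ℕ) (hk : 1 ≤ k) (m : ℕ → ℕ)
    (hm : ∀ i, 1 ≤ i → i ≤ 2 * k → 1 ≤ m i) (hm1 : 2 ≤ m 1)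
    (i j : Fin (sig m (2 * k))) (hij : i ≠ j)
    (p q : ℕ) (hp : blk (2 * k) m (i : ℕ) = p) (hq : blk (2 * k) m (j : ℕ) = q)
    (hpq : p ≤ q) (t : ℝ) :
    ‖Ut (GammaEven (2 * k) m) t i j‖ ≤ 2 / (sig m q : ℝ) ∧
      (2 ≤ q → ‖Ut (GammaEven (2 * k) m) t i j‖ < 1) :=
  ut_offdiag_entry_bound_general k m hm1 i j hij p q hp hq hpq t
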